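/- arXiv:1712.02387 — 2 statements merged into one kernel-verified Lean document; each statement's English description precedes it below -/
import Mathlib

section
/- Let f : ℝ⁴ → ℝ be given by f(x,u,p,q) = (6p/u + 3/x)·q − 6p³/u² − 6p²/(x·u) − 6p/x² − 6u/x³ on the open set where x ≠ 0 and u ≠ 0. Then the relative invariant I₄ = f_{qq}(f_q² + 9 f_p − 3 D_x f_q) − 9 f_{pp} + 18 f_{uq} − 6 f_q f_{pq} vanishes identically on this set. -/
/-- Partial derivative with respect to the first variable `x`. -/
noncomputable def pX (g : ℝ → ℝ → ℝ → ℝ → ℝ) (x u p q : ℝ) : ℝ :=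
  deriv (fun t => g t u p q) x

/-- Partial derivative with respect to the second variable `u`. -/
noncomputable def pU (g : ℝ → ℝ → ℝ → ℝ → ℝ) (x u p q : ℝ) : ℝ :=
  deriv (fun t => g x t p q) u

/-- Partial derivative with respect to the third variable `p`. -/
noncomputable def pP (g : ℝ → ℝ → ℝ → ℝ → ℝ) (x u p q : ℝ) : ℝ :=
  deriv (fun t => g x u t q) p

/-- Partial derivative with respect to the fourth variable `q`. -/
noncomputable def pQ (g : ℝ → ℝ → ℝ → ℝ → ℝ) (x u p q : ℝ) : ℝ :=
  deriv (fun t => g x u p t) q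

/-- The total derivative operator
`D_x = ∂/∂x + p ∂/∂u + q ∂/∂p + f ∂/∂q` associated with the ODE `u''' = f`. -/
noncomputable def Dx (f g : ℝ → ℝ → ℝ → ℝ → ℝ) : ℝ → ℝ → ℝ → ℝ → ℝ :=
  fun x u p q =>
    pX g x u p q + p * pU g x u p q + q * pP g x u p q + f x u p q * pQ g x u p q

/-- The right hand side of the nonlinear ODE of Example 3.1:
`u''' = (6u'/u + 3/x)u'' − 6u'³/u² − 6u'²/(xu) − 6u'/x² − 6u/x³`. -/
noncomputable def f : ℝ → ℝ → ℝ → ℝ → ℝ := fun x u p q =>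
  (6 * p / u + 3 / x) * q - 6 * p ^ 3 / u ^ 2 - 6 * p ^ 2 / (x * u)
    - 6 * p / x ^ 2 - 6 * u / x ^ 3

/-! The right-hand side `f` is affine in `q`, so `f_qq = 0` kills the first summand of `I₄`.
What is left, `-9 f_pp + 18 f_uq - 6 f_q f_pq`, only involves `f_q = 6p/u + 3/x`, `f_pq = 6/u`,
`f_uq = -6p/u²` and `f_pp = -36p/u² - 12/(xu)`, and these cancel. -/

lemma pQ_eq_of_affine {g : ℝ → ℝ → ℝ → ℝ → ℝ} {x u p a : ℝ}
    (hg : ∀ t, g x u p t = a * t + g x u p 0) (q : ℝ) : pQ g x u p q = a := by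
  rw [pQ, funext hg]
  simp

lemma pQ_f (x u p q : ℝ) : pQ f x u p q = 6 * p / u + 3 / x :=
  pQ_eq_of_affine (fun t => by simp only [f]; ring) q

lemma pQ_pQ_f (x u p q : ℝ) : pQ (pQ f) x u p q = 0 :=
  pQ_eq_of_affine (fun t => by rw [pQ_f, pQ_f]; ring) q

lemma pP_f (x u p q : ℝ) :
    pP f x u p q = 6 / u * q - 18 * p ^ 2 / u ^ 2 - 12 * p / (x * u) - 6 / x ^ 2 := by
  have h := ((((hasDerivAt_id p).const_mul (6 * q / u - 6 / x ^ 2)).sub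
    ((hasDerivAt_pow 3 p).const_mul (6 / u ^ 2))).sub
    ((hasDerivAt_pow 2 p).const_mul (6 / (x * u)))).add_const (3 * q / x - 6 * u / x ^ 3)
  rw [pP]
  convert h.deriv using 1
  · congr 1
    funext t
    simp only [f, id, Pi.sub_apply]
    ring
  · ring

lemma pQ_pP_f (x u p q : ℝ) : pQ (pP f) x u p q = 6 / u :=
  pQ_eq_of_affine (fun t => by rw [pP_f, pP_f]; ring) q

lemma pP_pP_f (x u p q : ℝ) : pP (pP f) x u p q = -36 * p / u ^ 2 - 12 / (x * u) := by
  have h := (((hasDerivAt_pow 2 p).const_mul (-18 / u ^ 2)).add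
    ((hasDerivAt_id p).const_mul (-12 / (x * u)))).add_const (6 / u * q - 6 / x ^ 2)
  rw [pP]
  convert h.deriv using 1
  · congr 1
    funext t
    simp only [pP_f, id, Pi.add_apply]
    ring
  · ring

lemma pU_f {u : ℝ} (hu : u ≠ 0) (x p q : ℝ) :
    pU f x u p q = -6 * p / u ^ 2 * q + 12 * p ^ 3 / u ^ 3 + 6 * p ^ 2 / (x * u ^ 2) - 6 / x ^ 3 := by
  have hinv := hasDerivAt_inv hu
  have h := ((((hinv.const_mul (6 * p * q - 6 * p ^ 2 / x)).sub
    ((hinv.pow 2).const_mul (6 * p ^ 3))).sub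
    ((hasDerivAt_id u).const_mul (6 / x ^ 3))).add_const (3 * q / x - 6 * p / x ^ 2))
  rw [pU]
  convert h.deriv using 1
  · congr 1
    funext t
    simp only [f, id, Pi.sub_apply, Pi.pow_apply]
    ring
  · norm_num
    field_simp
    ring

lemma pQ_pU_f {u : ℝ} (hu : u ≠ 0) (x p q : ℝ) : pQ (pU f) x u p q = -6 * p / u ^ 2 :=
  pQ_eq_of_affine (fun t => by rw [pU_f hu, pU_f hu]; ring) q

/-- For `f` of Example 3.1, the relative invariant
`I₄ = f_qq (f_q² + 9 f_p − 3 Dₓ f_q) − 9 f_pp + 18 f_uq − 6 f_q f_pq`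
vanishes identically on the set `x ≠ 0`, `u ≠ 0`. -/
theorem I4_vanishes_example1 :
    ∀ x u p q : ℝ, x ≠ 0 → u ≠ 0 →
      pQ (pQ f) x u p q
          * ((pQ f x u p q) ^ 2 + 9 * pP f x u p q - 3 * Dx f (pQ f) x u p q)
        - 9 * pP (pP f) x u p q
        + 18 * pQ (pU f) x u p q
        - 6 * pQ f x u p q * pQ (pP f) x u p q = 0 := by
  intro x u p q _ hu
  rw [pQ_pQ_f, zero_mul, pP_pP_f, pQ_pU_f hu, pQ_f, pQ_pP_f]
  field_simp
  ring
end

section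
/- Let a, b, c be real constants and let I ⊆ ℝ be an open interval on which x·(a·x² + b·x + c) ≠ 0. Then the function u(x) = −1/(x·(a·x² + b·x + c)) is three times differentiable on I and satisfies on I the nonlinear ODE u''' = (6u'/u + 3/x)·u'' − 6u'³/u² − 6u'²/(x·u) − 6u'/x² − 6u/x³. -/
/-!
Under the point transformation `v = -1/(x u)`, i.e. `u = -1/(x v)`, a direct computation with
the quotient rule gives the identity `u''' - f(x, u, u', u'') = v''' / (x v²)` for every
three times differentiable `v` with `x v ≠ 0`. The functions in the theorem are exactly the
transforms of the quadratics `v = a x² + b x + c`, for which `v''' = 0`.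
-/

open Filter Topology

noncomputable section

def odeRhs (x u p q : ℝ) : ℝ :=
  (6 * p / u + 3 / x) * q - 6 * p ^ 3 / u ^ 2 - 6 * p ^ 2 / (x * u) - 6 * p / x ^ 2
    - 6 * u / x ^ 3

def HasDerivsUpToThreeOn (f f₁ f₂ f₃ : ℝ → ℝ) (s : Set ℝ) : Prop :=
  ∀ x ∈ s, HasDerivAt f (f₁ x) x ∧ HasDerivAt f₁ (f₂ x) x ∧ HasDerivAt f₂ (f₃ x) x

end

namespace HasDerivsUpToThreeOn

variable {f f₁ f₂ f₃ : ℝ → ℝ} {s : Set ℝ}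

theorem deriv_eventuallyEq (h : HasDerivsUpToThreeOn f f₁ f₂ f₃ s) (hs : IsOpen s) {x : ℝ}
    (hx : x ∈ s) : deriv f =ᶠ[𝓝 x] f₁ := by
  filter_upwards [hs.mem_nhds hx] with y hy using (h y hy).1.deriv

theorem hasDerivAt_deriv (h : HasDerivsUpToThreeOn f f₁ f₂ f₃ s) (hs : IsOpen s) {x : ℝ}
    (hx : x ∈ s) : HasDerivAt (deriv f) (f₂ x) x :=
  (h x hx).2.1.congr_of_eventuallyEq (h.deriv_eventuallyEq hs hx)

theorem hasDerivAt_deriv_deriv (h : HasDerivsUpToThreeOn f f₁ f₂ f₃ s) (hs : IsOpen s)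
    {x : ℝ} (hx : x ∈ s) : HasDerivAt (deriv (deriv f)) (f₃ x) x := by
  have hderiv₂ : deriv (deriv f) =ᶠ[𝓝 x] f₂ := by
    filter_upwards [hs.mem_nhds hx] with y hy using (h.hasDerivAt_deriv hs hy).deriv
  exact (h x hx).2.2.congr_of_eventuallyEq hderiv₂

theorem id_mul (h : HasDerivsUpToThreeOn f f₁ f₂ f₃ s) :
    HasDerivsUpToThreeOn (fun x => x * f x) (fun x => f x + x * f₁ x)
      (fun x => 2 * f₁ x + x * f₂ x) (fun x => 3 * f₂ x + x * f₃ x) s := by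
  intro x hx
  obtain ⟨h₁, h₂, h₃⟩ := h x hx
  refine ⟨?_, ?_, ?_⟩
  · exact ((hasDerivAt_id' x).mul h₁).congr_deriv (by ring)
  · exact (h₁.add ((hasDerivAt_id' x).mul h₂)).congr_deriv (by ring)
  · exact ((h₂.const_mul 2).add ((hasDerivAt_id' x).mul h₃)).congr_deriv (by ring)

theorem neg_one_div (h : HasDerivsUpToThreeOn f f₁ f₂ f₃ s) (hf : ∀ x ∈ s, f x ≠ 0) :
    HasDerivsUpToThreeOn (fun x => -1 / f x) (fun x => f₁ x / f x ^ 2)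
      (fun x => (f₂ x * f x - 2 * f₁ x ^ 2) / f x ^ 3)
      (fun x => (f₃ x * f x ^ 2 - 6 * f x * f₁ x * f₂ x + 6 * f₁ x ^ 3) / f x ^ 4) s := by
  intro x hx
  obtain ⟨h₁, h₂, h₃⟩ := h x hx
  have hx₀ := hf x hx
  refine ⟨?_, ?_, ?_⟩
  · exact ((hasDerivAt_const x (-1 : ℝ)).div h₁ hx₀).congr_deriv (by ring)
  · exact (h₂.div (h₁.pow 2) (pow_ne_zero 2 hx₀)).congr_deriv (by
      simp only [Pi.pow_apply]; field_simp; ring)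
  · exact ((h₃.mul h₁).sub ((h₂.pow 2).const_mul 2)).div (h₁.pow 3) (pow_ne_zero 3 hx₀)
      |>.congr_deriv (by
        simp only [Pi.pow_apply, Pi.mul_apply, Pi.sub_apply]; field_simp; ring)

end HasDerivsUpToThreeOn

theorem hasDerivsUpToThreeOn_quadratic (a b c : ℝ) (s : Set ℝ) :
    HasDerivsUpToThreeOn (fun x => a * x ^ 2 + b * x + c) (fun x => 2 * a * x + b)
      (fun _ => 2 * a) (fun _ => 0) s := by
  intro x _
  refine ⟨?_, ?_, hasDerivAt_const x _⟩
  · exact (((hasDerivAt_pow 2 x).const_mul a).add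
      ((hasDerivAt_id' x).const_mul b)).add_const c |>.congr_deriv (by ring)
  · exact ((hasDerivAt_id' x).const_mul (2 * a)).add_const b |>.congr_deriv (by ring)

theorem HasDerivsUpToThreeOn.exists_neg_one_div_id_mul {v v₁ v₂ v₃ : ℝ → ℝ} {s : Set ℝ}
    (hv : HasDerivsUpToThreeOn v v₁ v₂ v₃ s) (hne : ∀ x ∈ s, x * v x ≠ 0) :
    ∃ u₁ u₂ u₃, HasDerivsUpToThreeOn (fun x => -1 / (x * v x)) u₁ u₂ u₃ s ∧
      ∀ x ∈ s, u₃ x - odeRhs x (-1 / (x * v x)) (u₁ x) (u₂ x) = v₃ x / (x * v x ^ 2) := by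
  refine ⟨_, _, _, hv.id_mul.neg_one_div hne, fun x hx => ?_⟩
  have hx₀ : x ≠ 0 := left_ne_zero_of_mul (hne x hx)
  have hv₀ : v x ≠ 0 := right_ne_zero_of_mul (hne x hx)
  unfold odeRhs
  field_simp
  ring

theorem general_solution_example1_general (a b c : ℝ) (I : Set ℝ) (hI : IsOpen I)
    (hne : ∀ x ∈ I, x * (a * x ^ 2 + b * x + c) ≠ 0) :
    (∀ x ∈ I,
        DifferentiableAt ℝ (fun x => -1 / (x * (a * x ^ 2 + b * x + c))) x ∧
        DifferentiableAt ℝ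
          (deriv (fun x => -1 / (x * (a * x ^ 2 + b * x + c)))) x ∧
        DifferentiableAt ℝ
          (deriv (deriv (fun x => -1 / (x * (a * x ^ 2 + b * x + c))))) x) ∧
    (∀ x ∈ I,
        deriv (deriv (deriv (fun x => -1 / (x * (a * x ^ 2 + b * x + c))))) x
          = (6 * deriv (fun x => -1 / (x * (a * x ^ 2 + b * x + c))) x
                / (-1 / (x * (a * x ^ 2 + b * x + c))) + 3 / x)
              * deriv (deriv (fun x => -1 / (x * (a * x ^ 2 + b * x + c)))) x
            - 6 * (deriv (fun x => -1 / (x * (a * x ^ 2 + b * x + c))) x) ^ 3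
                / (-1 / (x * (a * x ^ 2 + b * x + c))) ^ 2
            - 6 * (deriv (fun x => -1 / (x * (a * x ^ 2 + b * x + c))) x) ^ 2
                / (x * (-1 / (x * (a * x ^ 2 + b * x + c))))
            - 6 * deriv (fun x => -1 / (x * (a * x ^ 2 + b * x + c))) x / x ^ 2
            - 6 * (-1 / (x * (a * x ^ 2 + b * x + c))) / x ^ 3) := by
  obtain ⟨u₁, u₂, u₃, hu, hresidual⟩ :=
    (hasDerivsUpToThreeOn_quadratic a b c I).exists_neg_one_div_id_mul hne
  refine ⟨fun x hx => ⟨(hu x hx).1.differentiableAt,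
    (hu.hasDerivAt_deriv hI hx).differentiableAt,
    (hu.hasDerivAt_deriv_deriv hI hx).differentiableAt⟩, fun x hx => ?_⟩
  change _ = odeRhs x _ _ _
  rw [(hu.hasDerivAt_deriv_deriv hI hx).deriv, (hu.hasDerivAt_deriv hI hx).deriv,
    (hu x hx).1.deriv]
  simpa [sub_eq_zero] using hresidual x hx

/-- For any constants `a, b, c` and open interval `I` on which
`x (a x² + b x + c) ≠ 0`, the function `u(x) = −1/(x(a x² + b x + c))` is three
times differentiable on `I` and solves the nonlinear ODE
`u''' = (6u'/u + 3/x)u'' − 6u'³/u² − 6u'²/(xu) − 6u'/x² − 6u/x³` there. -/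
theorem general_solution_example1 (a b c : ℝ) (I : Set ℝ) (hI : IsOpen I)
    (hconv : Convex ℝ I)
    (hne : ∀ x ∈ I, x * (a * x ^ 2 + b * x + c) ≠ 0) :
    (∀ x ∈ I,
        DifferentiableAt ℝ (fun x => -1 / (x * (a * x ^ 2 + b * x + c))) x ∧
        DifferentiableAt ℝ
          (deriv (fun x => -1 / (x * (a * x ^ 2 + b * x + c)))) x ∧
        DifferentiableAt ℝ
          (deriv (deriv (fun x => -1 / (x * (a * x ^ 2 + b * x + c))))) x) ∧
    (∀ x ∈ I,
        deriv (deriv (deriv (fun x => -1 / (x * (a * x ^ 2 + b * x + c))))) x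
          = (6 * deriv (fun x => -1 / (x * (a * x ^ 2 + b * x + c))) x
                / (-1 / (x * (a * x ^ 2 + b * x + c))) + 3 / x)
              * deriv (deriv (fun x => -1 / (x * (a * x ^ 2 + b * x + c)))) x
            - 6 * (deriv (fun x => -1 / (x * (a * x ^ 2 + b * x + c))) x) ^ 3
                / (-1 / (x * (a * x ^ 2 + b * x + c))) ^ 2
            - 6 * (deriv (fun x => -1 / (x * (a * x ^ 2 + b * x + c))) x) ^ 2
                / (x * (-1 / (x * (a * x ^ 2 + b * x + c))))
            - 6 * deriv (fun x => -1 / (x * (a * x ^ 2 + b * x + c))) x / x ^ 2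
            - 6 * (-1 / (x * (a * x ^ 2 + b * x + c))) / x ^ 3) :=
  general_solution_example1_general a b c I hI hne
end
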